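/- The map B(P) ⊗_{kC_H(P)} kN_G(P) → N̄_A^K(P) sending Br_P(b) ⊗ x to the class of b⊗x ∈ A^{Δ_{φ_x}(P)} in A(Δ_{φ_x}(P)) (for b ∈ B^P and x ∈ N_G(P), where φ_x(u) := x^{-1}ux) is a well-defined injective homomorphism of k-algebras, where the source carries the multiplication (Br_P(b) ⊗ x)(Br_P(c) ⊗ y) := Br_P(b·(c^{x^{-1}})) ⊗ xy; its image is a graded subalgebra of N̄_A^K(P), homogeneous with respect to the pairs (φ_x, x̄). -/

import Mathlib

open scoped Classical DirectSum

noncomputable abbrev subQuot {R M : Type*} [Ring R] [AddCommGroup M] [Module R M]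
    (S T : Submodule R M) : Type _ := ↥S ⧸ T.comap S.subtype

section Common

variable (𝒪 : Type*) [CommRing 𝒪]
variable {A : Type*} [Ring A] [Algebra 𝒪 A]
variable {P : Type*} [Group P]

/-- `A^{Δ_φ(Q)}`; for `φ = 1` these are the `Q`-fixed points under conjugation. -/
def intFixed (σ : P →* Aˣ) (φ : P ≃* P) (Q : Subgroup P) : Submodule 𝒪 A where
  carrier := {a | ∀ u ∈ Q, (σ u : A) * a = a * (σ (φ u) : A)}
  add_mem' := by intro a b ha hb u hu; rw [mul_add, add_mul, ha u hu, hb u hu]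
  zero_mem' := by intro u hu; rw [mul_zero, zero_mul]
  smul_mem' := by intro r a ha u hu
                  rw [mul_smul_comm, smul_mul_assoc, ha u hu]

theorem intFixed_one_mul_mem {σ : P →* Aˣ} {a b : A}
    (ha : a ∈ intFixed 𝒪 σ (1 : MulAut P) ⊤) (hb : b ∈ intFixed 𝒪 σ (1 : MulAut P) ⊤) :
    a * b ∈ intFixed 𝒪 σ (1 : MulAut P) ⊤ := by
  intro u hu
  have ha' : (σ u : A) * a = a * (σ u : A) := by simpa using ha u hu
  have hb' : (σ u : A) * b = b * (σ u : A) := by simpa using hb u hu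
  show (σ u : A) * (a * b) = (a * b) * (σ ((1 : MulAut P) u) : A)
  simp only [MulAut.one_apply]
  rw [← mul_assoc, ha', mul_assoc, hb', mul_assoc]

/-- relative trace `Tr_{Δ_φ(Q)}^{Δ_φ(P)}`. -/
noncomputable def relTr [Finite P] (σ : P →* Aˣ) (φ : P ≃* P) (Q : Subgroup P) (c : A) : A :=
  ∑ᶠ x : Quotient (QuotientGroup.rightRel Q),
    ((σ x.out)⁻¹ : Aˣ) * c * (σ (φ x.out) : A)

/-- `Σ_{Q < P} A^{Δ_φ(P)}_{Δ_φ(Q)}`. -/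
noncomputable def trSum [Finite P] (σ : P →* Aˣ) (φ : P ≃* P) : Submodule 𝒪 A :=
  ⨆ Q : {Q : Subgroup P // Q < ⊤},
    Submodule.span 𝒪 (relTr σ φ Q '' (intFixed 𝒪 σ φ Q))

/-- `Σ_{Q<P} A^{Δ_φ(P)}_{Δ_φ(Q)} + 𝔭·A^{Δ_φ(P)}`. -/
noncomputable def brDen [Finite P] (𝔭 : Ideal 𝒪) (σ : P →* Aˣ) (φ : P ≃* P) : Submodule 𝒪 A :=
  trSum 𝒪 σ φ ⊔ 𝔭 • intFixed 𝒪 σ φ ⊤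

/-- the Brauer quotient `A(Δ_φ(P))`. -/
noncomputable abbrev BrQuot [Finite P] (𝔭 : Ideal 𝒪) (σ : P →* Aˣ) (φ : P ≃* P) :=
  subQuot (intFixed 𝒪 σ φ ⊤) (brDen 𝒪 𝔭 σ φ)

end Common

section Conj

variable {G : Type*} [Group G]

/-- `Aut_Ḡ(P)`. -/
def AutBar (H P : Subgroup G) [H.Normal] : Subgroup (MulAut ↥P) where
  carrier := {φ | ∃ g : G, ∀ u : ↥P, ((φ u : G) : G ⧸ H) = ↑(g⁻¹ * ↑u * g)}
  one_mem' := ⟨1, fun u => by simp⟩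
  mul_mem' := by
    rintro φ ψ ⟨g, hg⟩ ⟨h, hh⟩
    refine ⟨h * g, fun u => ?_⟩
    rw [MulAut.mul_apply, hg (ψ u)]
    simp only [QuotientGroup.mk_mul, QuotientGroup.mk_inv, mul_inv_rev, hh u]
    group
  inv_mem' := by
    rintro φ ⟨g, hg⟩
    refine ⟨g⁻¹, fun u => ?_⟩
    have h1 := hg (φ⁻¹ u)
    rw [MulAut.apply_inv_self] at h1
    simp only [QuotientGroup.mk_mul, QuotientGroup.mk_inv, inv_inv] at h1 ⊢
    rw [h1]
    group

/-- for `x` in the normalizer of `P`, the automorphism `u ↦ x·u·x⁻¹` of `P`;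
`φ_x = conjAut P x⁻¹`. -/
def conjAut (P : Subgroup G) (x : ↥(Subgroup.normalizer (P : Set G))) : MulAut ↥P where
  toFun u := ⟨↑x * ↑u * (↑x)⁻¹, (Subgroup.mem_normalizer_iff.mp x.2 ↑u).mp u.2⟩
  invFun u := ⟨(↑x)⁻¹ * ↑u * ↑x, by
    have h := (Subgroup.mem_normalizer_iff.mp
      (inv_mem x.2 : (↑x)⁻¹ ∈ (Subgroup.normalizer (P : Set G))) ↑u).mp u.2
    simpa using h⟩
  left_inv u := by ext; simp [mul_assoc]
  right_inv u := by ext; simp [mul_assoc]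
  map_mul' u v := by ext; simp

variable (H : Subgroup G) [H.Normal] (P : Subgroup G)

theorem conjAut_mem_AutBar (x : ↥(Subgroup.normalizer (P : Set G))) : conjAut P x⁻¹ ∈ AutBar H P := by
  refine ⟨(↑x : G), fun u => ?_⟩
  show ((↑(x⁻¹ : ↥(Subgroup.normalizer (P : Set G))) * ↑u * (↑(x⁻¹ : ↥(Subgroup.normalizer (P : Set G))))⁻¹ : G) : G ⧸ H) =
    ↑((↑x : G)⁻¹ * ↑u * ↑x)
  simp

variable (𝒪 : Type*) [CommRing 𝒪] {A : Type*} [Ring A] [Algebra 𝒪 A]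

/-- for `x ∈ N_G(P)`, the image of `x` in `A` lies in `A^{Δ_{φ_x}(P)}`. -/
theorem sigma_mem_conjFixed (σG : G →* Aˣ) (x : ↥(Subgroup.normalizer (P : Set G))) :
    ((σG ↑x : Aˣ) : A) ∈ intFixed 𝒪 (σG.comp P.subtype) (conjAut P x⁻¹) ⊤ := by
  intro u _
  have h : σG ↑(u : ↥P) * σG ↑x = σG ↑x * σG ↑((conjAut P x⁻¹ u : ↥P) : G) := by
    rw [← map_mul, ← map_mul]
    congr 1
    show (↑u : G) * ↑x = ↑x * (((↑x)⁻¹ : G) * ↑u * ((↑x)⁻¹)⁻¹)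
    group
  have h2 := congrArg (fun z : Aˣ => (z : A)) h
  simpa using h2

/-- for `c ∈ C_G(P)`, the image of `c` in `A` lies in `A^P`. -/
theorem sigma_mem_centralFixed (σG : G →* Aˣ) {c : G}
    (hc : c ∈ Subgroup.centralizer (P : Set G)) :
    ((σG c : Aˣ) : A) ∈ intFixed 𝒪 (σG.comp P.subtype) (1 : MulAut ↥P) ⊤ := by
  intro u _
  have h : σG ↑(u : ↥P) * σG c = σG c * σG ↑((((1 : MulAut ↥P)) u : ↥P) : G) := by
    rw [← map_mul, ← map_mul]
    congr 1
    simpa using (Subgroup.mem_centralizer_iff.mp hc ↑u u.2)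
  have h2 := congrArg (fun z : Aˣ => (z : A)) h
  simpa using h2

/-- for `a ∈ A^P` and `x ∈ N_G(P)`, `a·x ∈ A^{Δ_{φ_x}(P)}`. -/
theorem aSigma_mem_conjFixed (σG : G →* Aˣ) (x : ↥(Subgroup.normalizer (P : Set G))) {a : A}
    (ha : a ∈ intFixed 𝒪 (σG.comp P.subtype) (1 : MulAut ↥P) ⊤) :
    a * ((σG ↑x : Aˣ) : A) ∈ intFixed 𝒪 (σG.comp P.subtype) (conjAut P x⁻¹) ⊤ := by
  intro u hu
  have h1 := ha u hu
  rw [MulAut.one_apply] at h1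
  have h2 := sigma_mem_conjFixed P 𝒪 σG x u hu
  rw [← mul_assoc, h1, mul_assoc, h2, ← mul_assoc]

/-- for `b ∈ B^P = (𝒜 1 ∩ A^P)` and `c ∈ C_H(P)`, `b·c ∈ B^P`. -/
theorem bSigma_mem (σG : G →* Aˣ) (𝒜 : G ⧸ H → Submodule 𝒪 A)
    (hmul : ∀ x y : G ⧸ H, 𝒜 x * 𝒜 y ≤ 𝒜 (x * y))
    (hσ : ∀ g : G, ((σG g : Aˣ) : A) ∈ 𝒜 ↑g)
    {c : G} (hc : c ∈ Subgroup.centralizer (P : Set G) ⊓ H)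
    {b : A} (hb : b ∈ 𝒜 1 ⊓ intFixed 𝒪 (σG.comp P.subtype) (1 : MulAut ↥P) ⊤) :
    b * ((σG c : Aˣ) : A) ∈ 𝒜 1 ⊓ intFixed 𝒪 (σG.comp P.subtype) (1 : MulAut ↥P) ⊤ := by
  constructor
  · have h1 : ((σG c : Aˣ) : A) ∈ 𝒜 1 := by
      have h2 := hσ c
      rwa [(QuotientGroup.eq_one_iff c).mpr hc.2] at h2
    have h3 := hmul 1 1 (Submodule.mul_mem_mul hb.1 h1)
    rwa [one_mul] at h3
  · exact intFixed_one_mul_mem 𝒪 hb.2 (sigma_mem_centralFixed P 𝒪 σG hc.1)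

end Conj

set_option linter.unusedSectionVars false
section AuxProj

variable {𝒪 : Type*} [CommRing 𝒪] {A : Type*} [Ring A] [Algebra 𝒪 A]
variable {ι : Type*} [Group ι] [DecidableEq ι]

/-- projection onto the degree-`e` component of an internally graded algebra. -/
noncomputable def gradeProj (𝒜 : ι → Submodule 𝒪 A) (hdec : DirectSum.IsInternal 𝒜) (e : ι) :
    A →ₗ[𝒪] A :=
  (𝒜 e).subtype ∘ₗ (DirectSum.component 𝒪 ι (fun i => ↥(𝒜 i)) e) ∘ₗ
    ((LinearEquiv.ofBijective (DirectSum.coeLinearMap 𝒜) hdec).symm).toLinearMap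

theorem gradeProj_mem (𝒜 : ι → Submodule 𝒪 A) (hdec : DirectSum.IsInternal 𝒜) (e : ι) (a : A) :
    gradeProj 𝒜 hdec e a ∈ 𝒜 e := by
  simp only [gradeProj, LinearMap.coe_comp, Function.comp_apply, Submodule.coe_subtype]
  exact SetLike.coe_mem _

theorem gradeProj_self (𝒜 : ι → Submodule 𝒪 A) (hdec : DirectSum.IsInternal 𝒜) {e : ι} {a : A}
    (ha : a ∈ 𝒜 e) : gradeProj 𝒜 hdec e a = a := by
  simp only [gradeProj, LinearMap.coe_comp, Function.comp_apply, Submodule.coe_subtype,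
    LinearEquiv.coe_toLinearMap]
  rw [show DirectSum.component 𝒪 ι (fun i => ↥(𝒜 i)) e
      ((LinearEquiv.ofBijective (DirectSum.coeLinearMap 𝒜) hdec).symm a) =
      (((LinearEquiv.ofBijective (DirectSum.coeLinearMap 𝒜) hdec).symm) a) e from rfl,
    hdec.ofBijective_coeLinearMap_of_mem ha]

theorem gradeProj_ne (𝒜 : ι → Submodule 𝒪 A) (hdec : DirectSum.IsInternal 𝒜) {d e : ι} {a : A}
    (ha : a ∈ 𝒜 d) (hde : d ≠ e) : gradeProj 𝒜 hdec e a = 0 := by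
  simp only [gradeProj, LinearMap.coe_comp, Function.comp_apply, Submodule.coe_subtype,
    LinearEquiv.coe_toLinearMap]
  rw [show DirectSum.component 𝒪 ι (fun i => ↥(𝒜 i)) e
      ((LinearEquiv.ofBijective (DirectSum.coeLinearMap 𝒜) hdec).symm a) =
      (((LinearEquiv.ofBijective (DirectSum.coeLinearMap 𝒜) hdec).symm) a) e from rfl,
    hdec.ofBijective_coeLinearMap_of_mem_ne hde ha]
  rfl

theorem gradeProj_mul_left (𝒜 : ι → Submodule 𝒪 A) (hdec : DirectSum.IsInternal 𝒜)
    (hmul : ∀ x y : ι, 𝒜 x * 𝒜 y ≤ 𝒜 (x * y))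
    {d : ι} {w : A} (hw : w ∈ 𝒜 d) (e : ι) (a : A) :
    gradeProj 𝒜 hdec (d * e) (w * a) = w * gradeProj 𝒜 hdec e a := by
  have htop : (⊤ : Submodule 𝒪 A) = ⨆ i, 𝒜 i := hdec.submodule_iSup_eq_top.symm
  have : a ∈ (⊤ : Submodule 𝒪 A) := trivial
  rw [htop] at this
  refine Submodule.iSup_induction (motive := fun a => gradeProj 𝒜 hdec (d * e) (w * a)
      = w * gradeProj 𝒜 hdec e a) 𝒜 this ?_ ?_ ?_
  · intro f b hb
    by_cases hef : e = f
    · subst hef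
      rw [gradeProj_self 𝒜 hdec hb,
        gradeProj_self 𝒜 hdec (hmul d e (Submodule.mul_mem_mul hw hb))]
    · rw [gradeProj_ne 𝒜 hdec hb (fun h => hef h.symm),
        gradeProj_ne 𝒜 hdec (hmul d f (Submodule.mul_mem_mul hw hb))
          (fun h => hef (mul_left_cancel h).symm), mul_zero]
  · simp
  · intro x y hx hy
    rw [mul_add, map_add, map_add, hx, hy, mul_add]

theorem gradeProj_mul_right (𝒜 : ι → Submodule 𝒪 A) (hdec : DirectSum.IsInternal 𝒜)
    (hmul : ∀ x y : ι, 𝒜 x * 𝒜 y ≤ 𝒜 (x * y))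
    {d : ι} {w : A} (hw : w ∈ 𝒜 d) (e : ι) (a : A) :
    gradeProj 𝒜 hdec (e * d) (a * w) = gradeProj 𝒜 hdec e a * w := by
  have htop : (⊤ : Submodule 𝒪 A) = ⨆ i, 𝒜 i := hdec.submodule_iSup_eq_top.symm
  have : a ∈ (⊤ : Submodule 𝒪 A) := trivial
  rw [htop] at this
  refine Submodule.iSup_induction (motive := fun a => gradeProj 𝒜 hdec (e * d) (a * w)
      = gradeProj 𝒜 hdec e a * w) 𝒜 this ?_ ?_ ?_
  · intro f b hb
    by_cases hef : e = f
    · subst hef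
      rw [gradeProj_self 𝒜 hdec hb,
        gradeProj_self 𝒜 hdec (hmul e d (Submodule.mul_mem_mul hb hw))]
    · rw [gradeProj_ne 𝒜 hdec hb (fun h => hef h.symm),
        gradeProj_ne 𝒜 hdec (hmul f d (Submodule.mul_mem_mul hb hw))
          (fun h => hef (mul_right_cancel h).symm), zero_mul]
  · simp
  · intro x y hx hy
    rw [add_mul, map_add, map_add, hx, hy, add_mul]

end AuxProj
section AuxConj
set_option linter.unusedSectionVars false

variable {𝒪 : Type*} [CommRing 𝒪] {A : Type*} [Ring A] [Algebra 𝒪 A]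
variable {G : Type*} [Group G] [Finite G] (H P : Subgroup G) [H.Normal]
variable (σG : G →* Aˣ)

theorem conjAut_inv_apply_coe (x : ↥(Subgroup.normalizer (P : Set G))) (u : ↥P) :
    (↑(conjAut P x⁻¹ u) : G) = (↑x)⁻¹ * ↑u * ↑x := by
  show ((↑(x⁻¹) : G) * ↑u * (↑(x⁻¹) : G)⁻¹ : G) = _
  simp

theorem sigma_comm (x : ↥(Subgroup.normalizer (P : Set G))) (u : ↥P) :
    ((σG ↑u : Aˣ) : A) * ((σG ↑x : Aˣ) : A) =
      ((σG ↑x : Aˣ) : A) * ((σG ↑(conjAut P x⁻¹ u) : Aˣ) : A) := by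
  rw [conjAut_inv_apply_coe]
  have : (↑u : G) * ↑x = ↑x * ((↑x)⁻¹ * ↑u * ↑x) := by group
  rw [← Units.val_mul, ← Units.val_mul, ← map_mul, ← map_mul, this]

theorem mul_sigma_mem_intFixed (x : ↥(Subgroup.normalizer (P : Set G))) (Q : Subgroup ↥P) {a : A}
    (ha : a ∈ intFixed 𝒪 (σG.comp P.subtype) (1 : MulAut ↥P) Q) :
    a * ((σG ↑x : Aˣ) : A) ∈ intFixed 𝒪 (σG.comp P.subtype) (conjAut P x⁻¹) Q := by
  intro u hu
  have h1 := ha u hu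
  simp only [MulAut.one_apply, MonoidHom.comp_apply, Subgroup.coe_subtype] at h1
  show ((σG ↑u : Aˣ) : A) * _ = _ * ((σG ↑(conjAut P x⁻¹ u) : Aˣ) : A)
  rw [← mul_assoc, h1, mul_assoc, sigma_comm, ← mul_assoc]

theorem relTr_mul_sigma (x : ↥(Subgroup.normalizer (P : Set G))) (Q : Subgroup ↥P) (c : A) :
    relTr (σG.comp P.subtype) (1 : MulAut ↥P) Q c * ((σG ↑x : Aˣ) : A) =
      relTr (σG.comp P.subtype) (conjAut P x⁻¹) Q (c * ((σG ↑x : Aˣ) : A)) := by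
  unfold relTr
  haveI : Fintype (Quotient (QuotientGroup.rightRel Q)) := Fintype.ofFinite _
  rw [finsum_eq_sum_of_fintype, finsum_eq_sum_of_fintype, Finset.sum_mul]
  refine Finset.sum_congr rfl fun z _ => ?_
  simp only [MulAut.one_apply, MonoidHom.comp_apply, Subgroup.coe_subtype]
  rw [mul_assoc, mul_assoc, sigma_comm P σG x z.out, ← mul_assoc c, ← mul_assoc]

end AuxConj
section AuxPsi
set_option linter.unusedSectionVars false

variable {𝒪 : Type*} [CommRing 𝒪] {A : Type*} [Ring A] [Algebra 𝒪 A]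
variable {G : Type*} [Group G] [Finite G] (H P : Subgroup G) [H.Normal]
variable (σG : G →* Aˣ) (𝒜 : G ⧸ H → Submodule 𝒪 A)

theorem sigma_inv_comm (x : ↥(Subgroup.normalizer (P : Set G))) (u : ↥P) :
    ((σG ((↑x)⁻¹ * ↑u * ↑x) : Aˣ) : A) * (((σG ↑x)⁻¹ : Aˣ) : A) =
      (((σG ↑x)⁻¹ : Aˣ) : A) * ((σG ↑u : Aˣ) : A) := by
  have h : σG ((↑x : G)⁻¹ * ↑u * ↑x) * (σG ↑x)⁻¹ = (σG ↑x)⁻¹ * σG ↑u := by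
    rw [map_mul, map_mul, map_inv]
    group
  rw [← Units.val_mul, h, Units.val_mul]

variable (hmul : ∀ x y : G ⧸ H, 𝒜 x * 𝒜 y ≤ 𝒜 (x * y))
variable (hσ : ∀ g : G, ((σG g : Aˣ) : A) ∈ 𝒜 ↑g)
variable (hdec : DirectSum.IsInternal 𝒜)

include hmul hσ

theorem sigma_inv_mem (x : ↥(Subgroup.normalizer (P : Set G))) :
    (((σG ↑x)⁻¹ : Aˣ) : A) ∈ 𝒜 ((((↑x : G)⁻¹ : G)) : G ⧸ H) := by
  rw [← map_inv]
  exact hσ _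

theorem psi_grade_mem (x : ↥(Subgroup.normalizer (P : Set G))) (a : A) :
    gradeProj 𝒜 hdec (((↑x : G)) : G ⧸ H) a * (((σG ↑x)⁻¹ : Aˣ) : A) ∈ 𝒜 1 := by
  have h := hmul (((↑x : G)) : G ⧸ H) ((((↑x : G)⁻¹ : G)) : G ⧸ H)
    (Submodule.mul_mem_mul (gradeProj_mem 𝒜 hdec _ a)
      (sigma_inv_mem H P σG 𝒜 hmul hσ x))
  rwa [show ((((↑x : G)) : G ⧸ H) * (((↑x : G)⁻¹ : G) : G ⧸ H)) = 1 by
    rw [← QuotientGroup.mk_mul]; simp] at h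

theorem psi_comm (x : ↥(Subgroup.normalizer (P : Set G))) {u : ↥P} {a : A}
    (hau : ((σG ↑u : Aˣ) : A) * a = a * ((σG ↑((conjAut P x⁻¹) u) : Aˣ) : A)) :
    ((σG ↑u : Aˣ) : A) * (gradeProj 𝒜 hdec (((↑x : G)) : G ⧸ H) a * (((σG ↑x)⁻¹ : Aˣ) : A)) =
      (gradeProj 𝒜 hdec (((↑x : G)) : G ⧸ H) a * (((σG ↑x)⁻¹ : Aˣ) : A)) *
        ((σG ↑u : Aˣ) : A) := by
  rw [conjAut_inv_apply_coe] at hau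
  have e1 : ((σG ↑u : Aˣ) : A) * gradeProj 𝒜 hdec (((↑x : G)) : G ⧸ H) a =
      gradeProj 𝒜 hdec (((↑u : G) : G ⧸ H) * (((↑x : G)) : G ⧸ H)) (((σG ↑u : Aˣ) : A) * a) :=
    (gradeProj_mul_left 𝒜 hdec hmul (hσ ↑u) _ a).symm
  have hdeg : (((↑u : G) : G ⧸ H) * (((↑x : G)) : G ⧸ H)) =
      ((((↑x : G)) : G ⧸ H) * ((((↑x : G)⁻¹ * ↑u * ↑x : G)) : G ⧸ H)) := by
    rw [← QuotientGroup.mk_mul, ← QuotientGroup.mk_mul]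
    congr 1
    group
  have e2 : gradeProj 𝒜 hdec ((((↑x : G)) : G ⧸ H) * ((((↑x : G)⁻¹ * ↑u * ↑x : G)) : G ⧸ H))
        (a * ((σG ((↑x : G)⁻¹ * ↑u * ↑x) : Aˣ) : A)) =
      gradeProj 𝒜 hdec (((↑x : G)) : G ⧸ H) a *
        ((σG ((↑x : G)⁻¹ * ↑u * ↑x) : Aˣ) : A) :=
    gradeProj_mul_right 𝒜 hdec hmul (hσ _) _ a
  rw [← mul_assoc, e1, hau, hdeg, e2, mul_assoc, sigma_inv_comm P σG x u, ← mul_assoc]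

theorem psi_mem (x : ↥(Subgroup.normalizer (P : Set G))) (Q : Subgroup ↥P) {a : A}
    (ha : a ∈ intFixed 𝒪 (σG.comp P.subtype) (conjAut P x⁻¹) Q) :
    gradeProj 𝒜 hdec (((↑x : G)) : G ⧸ H) a * (((σG ↑x)⁻¹ : Aˣ) : A) ∈
      𝒜 1 ⊓ intFixed 𝒪 (σG.comp P.subtype) (1 : MulAut ↥P) Q := by
  refine ⟨psi_grade_mem H P σG 𝒜 hmul hσ hdec x a, fun u hu => ?_⟩
  have h1 := ha u hu
  simp only [MonoidHom.comp_apply, Subgroup.coe_subtype] at h1 ⊢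
  simp only [MulAut.one_apply]
  exact psi_comm H P σG 𝒜 hmul hσ hdec x h1

theorem psi_relTr (x : ↥(Subgroup.normalizer (P : Set G))) (Q : Subgroup ↥P) (c : A) :
    gradeProj 𝒜 hdec (((↑x : G)) : G ⧸ H)
        (relTr (σG.comp P.subtype) (conjAut P x⁻¹) Q c) * (((σG ↑x)⁻¹ : Aˣ) : A) =
      relTr (σG.comp P.subtype) (1 : MulAut ↥P) Q
        (gradeProj 𝒜 hdec (((↑x : G)) : G ⧸ H) c * (((σG ↑x)⁻¹ : Aˣ) : A)) := by
  unfold relTr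
  haveI : Fintype (Quotient (QuotientGroup.rightRel Q)) := Fintype.ofFinite _
  rw [finsum_eq_sum_of_fintype, finsum_eq_sum_of_fintype, map_sum, Finset.sum_mul]
  refine Finset.sum_congr rfl fun z _ => ?_
  simp only [MulAut.one_apply, MonoidHom.comp_apply, Subgroup.coe_subtype, conjAut_inv_apply_coe]
  have hWmem : ((((σG ↑(z.out : ↥P))⁻¹ : Aˣ)) : A) ∈ 𝒜 (((↑(z.out : ↥P) : G)⁻¹ : G) : G ⧸ H) := by
    rw [← map_inv]; exact hσ _
  have e1 : gradeProj 𝒜 hdec ((((↑(z.out : ↥P) : G)⁻¹ : G) : G ⧸ H) *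
        ((((↑x : G)) : G ⧸ H) * (((↑x : G)⁻¹ * ↑(z.out : ↥P) * ↑x : G) : G ⧸ H)))
        ((((σG ↑(z.out : ↥P))⁻¹ : Aˣ) : A) *
          (c * ((σG ((↑x : G)⁻¹ * ↑(z.out : ↥P) * ↑x) : Aˣ) : A))) =
      (((σG ↑(z.out : ↥P))⁻¹ : Aˣ) : A) *
        gradeProj 𝒜 hdec ((((↑x : G)) : G ⧸ H) * (((↑x : G)⁻¹ * ↑(z.out : ↥P) * ↑x : G) : G ⧸ H))
          (c * ((σG ((↑x : G)⁻¹ * ↑(z.out : ↥P) * ↑x) : Aˣ) : A)) :=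
    gradeProj_mul_left 𝒜 hdec hmul hWmem _ _
  have e2 : gradeProj 𝒜 hdec
        ((((↑x : G)) : G ⧸ H) * (((↑x : G)⁻¹ * ↑(z.out : ↥P) * ↑x : G) : G ⧸ H))
        (c * ((σG ((↑x : G)⁻¹ * ↑(z.out : ↥P) * ↑x) : Aˣ) : A)) =
      gradeProj 𝒜 hdec (((↑x : G)) : G ⧸ H) c *
        ((σG ((↑x : G)⁻¹ * ↑(z.out : ↥P) * ↑x) : Aˣ) : A) :=
    gradeProj_mul_right 𝒜 hdec hmul (hσ _) _ c
  have hdeg : ((((↑x : G)) : G ⧸ H)) = ((((↑(z.out : ↥P) : G)⁻¹ : G) : G ⧸ H) *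
      ((((↑x : G)) : G ⧸ H) * (((↑x : G)⁻¹ * ↑(z.out : ↥P) * ↑x : G) : G ⧸ H))) := by
    rw [← QuotientGroup.mk_mul, ← QuotientGroup.mk_mul]
    congr 1
    group
  conv_lhs => rw [mul_assoc ((((σG ↑(z.out : ↥P))⁻¹ : Aˣ)) : A) c, hdeg, e1, e2]
  rw [mul_assoc, mul_assoc, sigma_inv_comm P σG x z.out,
    ← mul_assoc (gradeProj 𝒜 hdec (((↑x : G)) : G ⧸ H) c), ← mul_assoc]

end AuxPsi
section AuxDen
set_option linter.unusedSectionVars false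

variable {𝒪 : Type*} [CommRing 𝒪] {A : Type*} [Ring A] [Algebra 𝒪 A]
variable {G : Type*} [Group G] [Finite G] (H P : Subgroup G) [H.Normal]
variable (σG : G →* Aˣ) (𝒜 : G ⧸ H → Submodule 𝒪 A) (𝔭 : Ideal 𝒪)
variable (hmul : ∀ x y : G ⧸ H, 𝒜 x * 𝒜 y ≤ 𝒜 (x * y))
variable (hσ : ∀ g : G, ((σG g : Aˣ) : A) ∈ 𝒜 ↑g)
variable (hdec : DirectSum.IsInternal 𝒜)

theorem den_mul_sigma (x : ↥(Subgroup.normalizer (P : Set G))) {a : A}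
    (ha : a ∈ (⨆ Q : {Q : Subgroup ↥P // Q < ⊤}, Submodule.span 𝒪
        (relTr (σG.comp P.subtype) (1 : MulAut ↥P) Q ''
          (𝒜 1 ⊓ intFixed 𝒪 (σG.comp P.subtype) (1 : MulAut ↥P) Q))) ⊔
      𝔭 • (𝒜 1 ⊓ intFixed 𝒪 (σG.comp P.subtype) (1 : MulAut ↥P) ⊤)) :
    a * ((σG ↑x : Aˣ) : A) ∈ brDen 𝒪 𝔭 (σG.comp P.subtype) (conjAut P x⁻¹) := by
  set f : A →ₗ[𝒪] A := LinearMap.mulRight 𝒪 ((σG ↑x : Aˣ) : A) with hf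
  have hmap : Submodule.map f ((⨆ Q : {Q : Subgroup ↥P // Q < ⊤}, Submodule.span 𝒪
        (relTr (σG.comp P.subtype) (1 : MulAut ↥P) Q ''
          (𝒜 1 ⊓ intFixed 𝒪 (σG.comp P.subtype) (1 : MulAut ↥P) Q))) ⊔
      𝔭 • (𝒜 1 ⊓ intFixed 𝒪 (σG.comp P.subtype) (1 : MulAut ↥P) ⊤)) ≤
      brDen 𝒪 𝔭 (σG.comp P.subtype) (conjAut P x⁻¹) := by
    rw [Submodule.map_sup]
    apply sup_le
    · rw [Submodule.map_iSup]
      apply iSup_le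
      intro Q
      rw [Submodule.map_span]
      apply le_trans ?_ (le_sup_left : trSum 𝒪 _ _ ≤ brDen 𝒪 𝔭 _ _)
      apply le_trans ?_ (le_iSup _ Q)
      apply Submodule.span_le.mpr
      rintro - ⟨-, ⟨c, hc, rfl⟩, rfl⟩
      apply Submodule.subset_span
      refine ⟨c * ((σG ↑x : Aˣ) : A), mul_sigma_mem_intFixed P σG x Q hc.2, ?_⟩
      rw [hf]
      simp only [LinearMap.mulRight_apply]
      exact (relTr_mul_sigma P σG x Q c).symm
    · rw [Submodule.map_smul'']
      apply le_trans ?_ (le_sup_right : 𝔭 • intFixed 𝒪 (σG.comp P.subtype) (conjAut P x⁻¹) ⊤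
        ≤ brDen 𝒪 𝔭 _ _)
      apply Submodule.smul_mono le_rfl
      rintro - ⟨c, hc, rfl⟩
      simp only [hf, LinearMap.mulRight_apply]
      exact mul_sigma_mem_intFixed P σG x ⊤ hc.2
  exact hmap ⟨a, ha, rfl⟩

include hmul hσ in
theorem brDen_psi (x : ↥(Subgroup.normalizer (P : Set G))) {a : A}
    (ha : a ∈ brDen 𝒪 𝔭 (σG.comp P.subtype) (conjAut P x⁻¹)) :
    gradeProj 𝒜 hdec (((↑x : G)) : G ⧸ H) a * (((σG ↑x)⁻¹ : Aˣ) : A) ∈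
      (⨆ Q : {Q : Subgroup ↥P // Q < ⊤}, Submodule.span 𝒪
        (relTr (σG.comp P.subtype) (1 : MulAut ↥P) Q ''
          (𝒜 1 ⊓ intFixed 𝒪 (σG.comp P.subtype) (1 : MulAut ↥P) Q))) ⊔
      𝔭 • (𝒜 1 ⊓ intFixed 𝒪 (σG.comp P.subtype) (1 : MulAut ↥P) ⊤) := by
  set f : A →ₗ[𝒪] A :=
    (LinearMap.mulRight 𝒪 (((σG ↑x)⁻¹ : Aˣ) : A)).comp
      (gradeProj 𝒜 hdec (((↑x : G)) : G ⧸ H)) with hf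
  have hfa : ∀ b : A, f b = gradeProj 𝒜 hdec (((↑x : G)) : G ⧸ H) b * (((σG ↑x)⁻¹ : Aˣ) : A) :=
    fun b => rfl
  have hmap : Submodule.map f (brDen 𝒪 𝔭 (σG.comp P.subtype) (conjAut P x⁻¹)) ≤
      (⨆ Q : {Q : Subgroup ↥P // Q < ⊤}, Submodule.span 𝒪
        (relTr (σG.comp P.subtype) (1 : MulAut ↥P) Q ''
          (𝒜 1 ⊓ intFixed 𝒪 (σG.comp P.subtype) (1 : MulAut ↥P) Q))) ⊔
      𝔭 • (𝒜 1 ⊓ intFixed 𝒪 (σG.comp P.subtype) (1 : MulAut ↥P) ⊤) := by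
    unfold brDen trSum
    rw [Submodule.map_sup]
    apply sup_le
    · rw [Submodule.map_iSup]
      apply iSup_le
      intro Q
      rw [Submodule.map_span]
      apply le_trans ?_ le_sup_left
      apply le_trans ?_ (le_iSup _ Q)
      apply Submodule.span_le.mpr
      rintro - ⟨-, ⟨c, hc, rfl⟩, rfl⟩
      apply Submodule.subset_span
      refine ⟨f c, psi_mem H P σG 𝒜 hmul hσ hdec x Q hc, ?_⟩
      rw [hfa, hfa]
      exact (psi_relTr H P σG 𝒜 hmul hσ hdec x Q c).symm
    · rw [Submodule.map_smul'']
      apply le_trans ?_ le_sup_right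
      apply Submodule.smul_mono le_rfl
      rintro - ⟨c, hc, rfl⟩
      rw [hfa]
      exact psi_mem H P σG 𝒜 hmul hσ hdec x ⊤ (fun u _ => hc u trivial)
  exact hmap ⟨a, ha, hfa a ▸ rfl⟩

end AuxDen
section AuxRep
set_option linter.unusedSectionVars false

variable {𝒪 : Type*} [CommRing 𝒪] {A : Type*} [Ring A] [Algebra 𝒪 A]
variable {G : Type*} [Group G] [Finite G] (H P : Subgroup G) [H.Normal]
variable (σG : G →* Aˣ)

theorem conjAut_eq_of_centralizer {x x' : ↥(Subgroup.normalizer (P : Set G))}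
    (h : (↑x' * (↑x)⁻¹ : G) ∈ Subgroup.centralizer (P : Set G)) :
    conjAut P x'⁻¹ = conjAut P x⁻¹ := by
  ext u
  have h2 := Subgroup.mem_centralizer_iff.mp h ↑u u.2
  show (↑(x'⁻¹) : G) * ↑u * (↑(x'⁻¹) : G)⁻¹ = (↑(x⁻¹) : G) * ↑u * (↑(x⁻¹) : G)⁻¹
  simp only [Subgroup.coe_inv, inv_inv] at h2 ⊢
  have : (↑u : G) * (↑x' * (↑x)⁻¹) = (↑x' * (↑x)⁻¹) * ↑u := h2
  calc (↑x' : G)⁻¹ * ↑u * ↑x' = (↑x' : G)⁻¹ * (↑u * (↑x' * (↑x)⁻¹)) * ↑x := by group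
    _ = (↑x' : G)⁻¹ * ((↑x' * (↑x)⁻¹) * ↑u) * ↑x := by rw [this]
    _ = (↑x : G)⁻¹ * ↑u * ↑x := by group

theorem centralizer_of_conjAut_eq {x x' : ↥(Subgroup.normalizer (P : Set G))}
    (h : conjAut P x'⁻¹ = conjAut P x⁻¹) :
    (↑x' * (↑x)⁻¹ : G) ∈ Subgroup.centralizer (P : Set G) := by
  rw [Subgroup.mem_centralizer_iff]
  intro g hg
  have h2 : ((conjAut P x'⁻¹ ⟨g, hg⟩ : ↥P) : G) = ((conjAut P x⁻¹ ⟨g, hg⟩ : ↥P) : G) := by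
    rw [h]
  rw [conjAut_inv_apply_coe, conjAut_inv_apply_coe] at h2
  calc g * (↑x' * (↑x)⁻¹) = ↑x' * ((↑x' : G)⁻¹ * g * ↑x') * (↑x)⁻¹ := by group
    _ = ↑x' * ((↑x : G)⁻¹ * g * ↑x) * (↑x)⁻¹ := by rw [h2]
    _ = ↑x' * (↑x : G)⁻¹ * g := by group

/-- representative of the `C_H(P)`-coset of `x` in `N_G(P)`. -/
noncomputable def repN : ↥(Subgroup.normalizer (P : Set G)) → ↥(Subgroup.normalizer (P : Set G)) :=
  fun x => (Quotient.mk (QuotientGroup.rightRel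
    ((Subgroup.centralizer (P : Set G) ⊓ H).subgroupOf (Subgroup.normalizer (P : Set G)))) x).out

theorem repN_spec (x : ↥(Subgroup.normalizer (P : Set G))) :
    (↑(repN H P x) * (↑x)⁻¹ : G) ∈ Subgroup.centralizer (P : Set G) ⊓ H := by
  have h0 : Quotient.mk (QuotientGroup.rightRel
      ((Subgroup.centralizer (P : Set G) ⊓ H).subgroupOf (Subgroup.normalizer (P : Set G)))) (repN H P x) =
      Quotient.mk _ x := Quotient.out_eq _
  have h1 := Quotient.eq.mp h0
  rw [QuotientGroup.rightRel_apply] at h1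
  have h2 := inv_mem h1
  rw [Subgroup.mem_subgroupOf] at h2
  simpa using h2

theorem repN_idem (x : ↥(Subgroup.normalizer (P : Set G))) : repN H P (repN H P x) = repN H P x := by
  unfold repN
  rw [Quotient.out_eq]

theorem repN_eq_of_rel {x x' : ↥(Subgroup.normalizer (P : Set G))}
    (h : (↑x' * (↑x)⁻¹ : G) ∈ Subgroup.centralizer (P : Set G) ⊓ H) :
    repN H P x' = repN H P x := by
  unfold repN
  congr 1
  refine Quotient.sound (QuotientGroup.rightRel_apply.mpr ?_)
  rw [Subgroup.mem_subgroupOf]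
  simpa using inv_mem h

end AuxRep
section AuxDS
set_option linter.unusedSectionVars false
set_option maxHeartbeats 1000000

variable {𝒪 : Type*} [CommRing 𝒪] {A : Type*} [Ring A] [Algebra 𝒪 A]
variable {G : Type*} [Group G] [Finite G] (H P : Subgroup G) [H.Normal]
variable (σG : G →* Aˣ) (𝔭 : Ideal 𝒪)

theorem dsum_of_congr {φ ψ : MulAut ↥P} (h : φ = ψ) (hφ : φ ∈ AutBar H P)
    (hψ : ψ ∈ AutBar H P) {a b : A} (hab : a = b)
    (ha : a ∈ intFixed 𝒪 (σG.comp P.subtype) φ ⊤)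
    (hb : b ∈ intFixed 𝒪 (σG.comp P.subtype) ψ ⊤) :
    DirectSum.of (fun φ : ↥(AutBar H P) => BrQuot 𝒪 𝔭 (σG.comp P.subtype) (φ : MulAut ↥P))
      ⟨φ, hφ⟩ (Submodule.Quotient.mk ⟨a, ha⟩) =
    DirectSum.of (fun φ : ↥(AutBar H P) => BrQuot 𝒪 𝔭 (σG.comp P.subtype) (φ : MulAut ↥P))
      ⟨ψ, hψ⟩ (Submodule.Quotient.mk ⟨b, hb⟩) := by
  subst h; subst hab; rfl

theorem dsum_component_of_eq {φ ψ : MulAut ↥P} (h : φ = ψ) (hφ : φ ∈ AutBar H P)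
    (hψ : ψ ∈ AutBar H P) {a : A}
    (ha : a ∈ intFixed 𝒪 (σG.comp P.subtype) φ ⊤)
    (hb : a ∈ intFixed 𝒪 (σG.comp P.subtype) ψ ⊤) :
    DirectSum.component 𝒪 ↥(AutBar H P)
      (fun φ : ↥(AutBar H P) => BrQuot 𝒪 𝔭 (σG.comp P.subtype) (φ : MulAut ↥P))
      ⟨ψ, hψ⟩ (DirectSum.of
        (fun φ : ↥(AutBar H P) => BrQuot 𝒪 𝔭 (σG.comp P.subtype) (φ : MulAut ↥P))
        ⟨φ, hφ⟩ (Submodule.Quotient.mk ⟨a, ha⟩)) =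
      Submodule.Quotient.mk ⟨a, hb⟩ := by
  subst h
  rw [← DirectSum.lof_eq_of 𝒪, DirectSum.component.lof_self]

theorem dsum_component_of_ne {φ ψ : MulAut ↥P} (h : φ ≠ ψ) (hφ : φ ∈ AutBar H P)
    (hψ : ψ ∈ AutBar H P) (v : BrQuot 𝒪 𝔭 (σG.comp P.subtype) φ) :
    DirectSum.component 𝒪 ↥(AutBar H P)
      (fun φ : ↥(AutBar H P) => BrQuot 𝒪 𝔭 (σG.comp P.subtype) (φ : MulAut ↥P))
      ⟨ψ, hψ⟩ (DirectSum.of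
        (fun φ : ↥(AutBar H P) => BrQuot 𝒪 𝔭 (σG.comp P.subtype) (φ : MulAut ↥P))
        ⟨φ, hφ⟩ v) = 0 := by
  rw [← DirectSum.lof_eq_of 𝒪, DirectSum.component.of, dif_neg]
  exact fun he => h (congrArg Subtype.val he)

end AuxDS
section AuxMain
set_option linter.unusedSectionVars false
set_option maxHeartbeats 1000000
set_option synthInstance.maxHeartbeats 1000000

variable {𝒪 : Type*} [CommRing 𝒪] {A : Type*} [Ring A] [Algebra 𝒪 A]
variable {G : Type*} [Group G] [Finite G] (H P : Subgroup G) [H.Normal]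
variable (σG : G →* Aˣ) (𝒜 : G ⧸ H → Submodule 𝒪 A) (𝔭 : Ideal 𝒪)

noncomputable instance brQuotAddCommGroup (φ : MulAut ↥P) :
    AddCommGroup (BrQuot 𝒪 𝔭 (σG.comp P.subtype) φ) := inferInstance

/-- right multiplication by the image of `x ∈ N_G(P)`, on Brauer quotients. -/
noncomputable def muMapS (x : ↥(Subgroup.normalizer (P : Set G))) :
    subQuot (𝒜 1 ⊓ intFixed 𝒪 (σG.comp P.subtype) (1 : MulAut ↥P) ⊤)
      ((⨆ Q : {Q : Subgroup ↥P // Q < ⊤}, Submodule.span 𝒪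
          (relTr (σG.comp P.subtype) (1 : MulAut ↥P) Q ''
            (𝒜 1 ⊓ intFixed 𝒪 (σG.comp P.subtype) (1 : MulAut ↥P) Q))) ⊔
        𝔭 • (𝒜 1 ⊓ intFixed 𝒪 (σG.comp P.subtype) (1 : MulAut ↥P) ⊤))
      →ₗ[𝒪] BrQuot 𝒪 𝔭 (σG.comp P.subtype) (conjAut P x⁻¹) :=
  Submodule.mapQ _ _
    (LinearMap.codRestrict (intFixed 𝒪 (σG.comp P.subtype) (conjAut P x⁻¹) ⊤)
      ((LinearMap.mulRight 𝒪 ((σG ↑x : Aˣ) : A)).comp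
        (𝒜 1 ⊓ intFixed 𝒪 (σG.comp P.subtype) (1 : MulAut ↥P) ⊤).subtype)
      (fun s => mul_sigma_mem_intFixed P σG x ⊤ s.2.2))
    (fun s hs => den_mul_sigma H P σG 𝒜 𝔭 x hs)

theorem muMapS_mk (x : ↥(Subgroup.normalizer (P : Set G))) (b : A)
    (hb : b ∈ 𝒜 1 ⊓ intFixed 𝒪 (σG.comp P.subtype) (1 : MulAut ↥P) ⊤) :
    muMapS H P σG 𝒜 𝔭 x (Submodule.Quotient.mk ⟨b, hb⟩) =
      Submodule.Quotient.mk ⟨b * ((σG ↑x : Aˣ) : A),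
        mul_sigma_mem_intFixed P σG x ⊤ hb.2⟩ := by
  unfold muMapS
  rfl

variable (hmul : ∀ x y : G ⧸ H, 𝒜 x * 𝒜 y ≤ 𝒜 (x * y))
variable (hσ : ∀ g : G, ((σG g : Aˣ) : A) ∈ 𝒜 ↑g)
variable (hdec : DirectSum.IsInternal 𝒜)

/-- the submodule of balancing relations. -/
noncomputable def relSpanS (hmul : ∀ x y : G ⧸ H, 𝒜 x * 𝒜 y ≤ 𝒜 (x * y))
    (hσ : ∀ g : G, ((σG g : Aˣ) : A) ∈ 𝒜 ↑g) :
    Submodule 𝒪 (↥(Subgroup.normalizer (P : Set G)) →₀ subQuot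
      (𝒜 1 ⊓ intFixed 𝒪 (σG.comp P.subtype) (1 : MulAut ↥P) ⊤)
      ((⨆ Q : {Q : Subgroup ↥P // Q < ⊤}, Submodule.span 𝒪
          (relTr (σG.comp P.subtype) (1 : MulAut ↥P) Q ''
            (𝒜 1 ⊓ intFixed 𝒪 (σG.comp P.subtype) (1 : MulAut ↥P) Q))) ⊔
        𝔭 • (𝒜 1 ⊓ intFixed 𝒪 (σG.comp P.subtype) (1 : MulAut ↥P) ⊤))) :=
  Submodule.span 𝒪 {z | ∃ (c x : ↥(Subgroup.normalizer (P : Set G)))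
    (hc : (↑c : G) ∈ Subgroup.centralizer (P : Set G) ⊓ H) (b : A)
    (hb : b ∈ 𝒜 1 ⊓ intFixed 𝒪 (σG.comp P.subtype) (1 : MulAut ↥P) ⊤),
    z = Finsupp.single (c * x) (Submodule.Quotient.mk ⟨b, hb⟩) -
      Finsupp.single x (Submodule.Quotient.mk ⟨b * ((σG ↑c : Aˣ) : A),
        bSigma_mem H P 𝒪 σG 𝒜 hmul hσ hc hb⟩)}

include hmul hσ in
theorem relSpan_le_ker :
    relSpanS H P σG 𝒜 𝔭 hmul hσ ≤ LinearMap.ker (Finsupp.lsum 𝒪 fun x : ↥(Subgroup.normalizer (P : Set G)) =>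
      (DirectSum.lof 𝒪 ↥(AutBar H P)
        (fun φ : ↥(AutBar H P) => BrQuot 𝒪 𝔭 (σG.comp P.subtype) (φ : MulAut ↥P))
        ⟨conjAut P x⁻¹, conjAut_mem_AutBar H P x⟩).comp (muMapS H P σG 𝒜 𝔭 x)) := by
  unfold relSpanS
  rw [Submodule.span_le]
  rintro z ⟨c, x, hc, b, hb, rfl⟩
  simp only [SetLike.mem_coe, LinearMap.mem_ker, map_sub, Finsupp.lsum_single,
    LinearMap.comp_apply]
  rw [muMapS_mk, muMapS_mk, sub_eq_zero, DirectSum.lof_eq_of, DirectSum.lof_eq_of]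
  refine dsum_of_congr H P σG 𝔭
    (conjAut_eq_of_centralizer P (by rw [Subgroup.coe_mul, mul_inv_cancel_right]; exact hc.1))
    _ _ ?_ _ _
  rw [Subgroup.coe_mul, map_mul, Units.val_mul, ← mul_assoc]

/-- the map `L`. -/
noncomputable def LmapS (hmul : ∀ x y : G ⧸ H, 𝒜 x * 𝒜 y ≤ 𝒜 (x * y))
    (hσ : ∀ g : G, ((σG g : Aˣ) : A) ∈ 𝒜 ↑g) :
    ((↥(Subgroup.normalizer (P : Set G)) →₀ subQuot
      (𝒜 1 ⊓ intFixed 𝒪 (σG.comp P.subtype) (1 : MulAut ↥P) ⊤)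
      ((⨆ Q : {Q : Subgroup ↥P // Q < ⊤}, Submodule.span 𝒪
          (relTr (σG.comp P.subtype) (1 : MulAut ↥P) Q ''
            (𝒜 1 ⊓ intFixed 𝒪 (σG.comp P.subtype) (1 : MulAut ↥P) Q))) ⊔
        𝔭 • (𝒜 1 ⊓ intFixed 𝒪 (σG.comp P.subtype) (1 : MulAut ↥P) ⊤))) ⧸
      relSpanS H P σG 𝒜 𝔭 hmul hσ) →ₗ[𝒪]
    (⨁ φ : ↥(AutBar H P), BrQuot 𝒪 𝔭 (σG.comp P.subtype) (φ : MulAut ↥P)) :=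
  Submodule.liftQ _ _ (relSpan_le_ker H P σG 𝒜 𝔭 hmul hσ)

theorem LmapS_apply (x : ↥(Subgroup.normalizer (P : Set G))) (b : A)
    (hb : b ∈ 𝒜 1 ⊓ intFixed 𝒪 (σG.comp P.subtype) (1 : MulAut ↥P) ⊤) :
    LmapS H P σG 𝒜 𝔭 hmul hσ
      (Submodule.Quotient.mk (Finsupp.single x (Submodule.Quotient.mk ⟨b, hb⟩))) =
    DirectSum.of (fun φ : ↥(AutBar H P) => BrQuot 𝒪 𝔭 (σG.comp P.subtype) (φ : MulAut ↥P))
      ⟨conjAut P x⁻¹, conjAut_mem_AutBar H P x⟩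
      (Submodule.Quotient.mk ⟨b * ((σG ↑x : Aˣ) : A),
        mul_sigma_mem_intFixed P σG x ⊤ hb.2⟩) := by
  unfold LmapS
  rw [Submodule.liftQ_apply, Finsupp.lsum_single, LinearMap.comp_apply, muMapS_mk,
    DirectSum.lof_eq_of]

/-- projection to degree `x̄` followed by right multiplication by `σ(x)⁻¹`. -/
noncomputable def rhoMapS (hmul : ∀ x y : G ⧸ H, 𝒜 x * 𝒜 y ≤ 𝒜 (x * y))
    (hσ : ∀ g : G, ((σG g : Aˣ) : A) ∈ 𝒜 ↑g) (hdec : DirectSum.IsInternal 𝒜)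
    (x : ↥(Subgroup.normalizer (P : Set G))) :
    BrQuot 𝒪 𝔭 (σG.comp P.subtype) (conjAut P x⁻¹) →ₗ[𝒪]
      subQuot (𝒜 1 ⊓ intFixed 𝒪 (σG.comp P.subtype) (1 : MulAut ↥P) ⊤)
      ((⨆ Q : {Q : Subgroup ↥P // Q < ⊤}, Submodule.span 𝒪
          (relTr (σG.comp P.subtype) (1 : MulAut ↥P) Q ''
            (𝒜 1 ⊓ intFixed 𝒪 (σG.comp P.subtype) (1 : MulAut ↥P) Q))) ⊔
        𝔭 • (𝒜 1 ⊓ intFixed 𝒪 (σG.comp P.subtype) (1 : MulAut ↥P) ⊤)) :=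
  Submodule.mapQ _ _
    (LinearMap.codRestrict (𝒜 1 ⊓ intFixed 𝒪 (σG.comp P.subtype) (1 : MulAut ↥P) ⊤)
      ((LinearMap.mulRight 𝒪 (((σG ↑x)⁻¹ : Aˣ) : A)).comp
        ((gradeProj 𝒜 hdec (((↑x : G)) : G ⧸ H)).comp
          (intFixed 𝒪 (σG.comp P.subtype) (conjAut P x⁻¹) ⊤).subtype))
      (fun s => psi_mem H P σG 𝒜 hmul hσ hdec x ⊤ s.2))
    (fun s hs => brDen_psi H P σG 𝒜 𝔭 hmul hσ hdec x hs)

theorem rhoMapS_mk (x : ↥(Subgroup.normalizer (P : Set G))) (a : A)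
    (ha : a ∈ intFixed 𝒪 (σG.comp P.subtype) (conjAut P x⁻¹) ⊤) :
    rhoMapS H P σG 𝒜 𝔭 hmul hσ hdec x (Submodule.Quotient.mk ⟨a, ha⟩) =
      Submodule.Quotient.mk ⟨gradeProj 𝒜 hdec (((↑x : G)) : G ⧸ H) a * (((σG ↑x)⁻¹ : Aˣ) : A),
        psi_mem H P σG 𝒜 hmul hσ hdec x ⊤ ha⟩ := by
  unfold rhoMapS
  rfl

/-- the retraction `R`. -/
noncomputable def RmapS (hmul : ∀ x y : G ⧸ H, 𝒜 x * 𝒜 y ≤ 𝒜 (x * y))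
    (hσ : ∀ g : G, ((σG g : Aˣ) : A) ∈ 𝒜 ↑g) (hdec : DirectSum.IsInternal 𝒜) :
    (⨁ φ : ↥(AutBar H P), BrQuot 𝒪 𝔭 (σG.comp P.subtype) (φ : MulAut ↥P)) →ₗ[𝒪]
    ((↥(Subgroup.normalizer (P : Set G)) →₀ subQuot
      (𝒜 1 ⊓ intFixed 𝒪 (σG.comp P.subtype) (1 : MulAut ↥P) ⊤)
      ((⨆ Q : {Q : Subgroup ↥P // Q < ⊤}, Submodule.span 𝒪
          (relTr (σG.comp P.subtype) (1 : MulAut ↥P) Q ''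
            (𝒜 1 ⊓ intFixed 𝒪 (σG.comp P.subtype) (1 : MulAut ↥P) Q))) ⊔
        𝔭 • (𝒜 1 ⊓ intFixed 𝒪 (σG.comp P.subtype) (1 : MulAut ↥P) ⊤))) ⧸
      relSpanS H P σG 𝒜 𝔭 hmul hσ) :=
  letI : Fintype ↥(Subgroup.normalizer (P : Set G)) := Fintype.ofFinite _
  ∑ x ∈ Finset.univ.filter (fun x : ↥(Subgroup.normalizer (P : Set G)) => repN H P x = x),
    ((relSpanS H P σG 𝒜 𝔭 hmul hσ).mkQ.comp ((Finsupp.lsingle x).comp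
      ((rhoMapS H P σG 𝒜 𝔭 hmul hσ hdec x).comp
        (DirectSum.component 𝒪 ↥(AutBar H P)
          (fun φ : ↥(AutBar H P) => BrQuot 𝒪 𝔭 (σG.comp P.subtype) (φ : MulAut ↥P))
          ⟨conjAut P x⁻¹, conjAut_mem_AutBar H P x⟩))))

include hmul hσ in
theorem RS_LS (x0 : ↥(Subgroup.normalizer (P : Set G))) (b : A)
    (hb : b ∈ 𝒜 1 ⊓ intFixed 𝒪 (σG.comp P.subtype) (1 : MulAut ↥P) ⊤) :
    RmapS H P σG 𝒜 𝔭 hmul hσ hdec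
      (DirectSum.of (fun φ : ↥(AutBar H P) => BrQuot 𝒪 𝔭 (σG.comp P.subtype) (φ : MulAut ↥P))
        ⟨conjAut P x0⁻¹, conjAut_mem_AutBar H P x0⟩
        (Submodule.Quotient.mk ⟨b * ((σG ↑x0 : Aˣ) : A),
          mul_sigma_mem_intFixed P σG x0 ⊤ hb.2⟩)) =
    (Submodule.Quotient.mk (Finsupp.single x0 (Submodule.Quotient.mk ⟨b, hb⟩)) :
      _ ⧸ relSpanS H P σG 𝒜 𝔭 hmul hσ) := by
  letI : Fintype ↥(Subgroup.normalizer (P : Set G)) := Fintype.ofFinite _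
  have hmem0 : b * ((σG ↑x0 : Aˣ) : A) ∈ 𝒜 (((↑x0 : G)) : G ⧸ H) := by
    have h := hmul 1 (((↑x0 : G)) : G ⧸ H) (Submodule.mul_mem_mul hb.1 (hσ ↑x0))
    rwa [one_mul] at h
  unfold RmapS
  rw [LinearMap.sum_apply]
  rw [Finset.sum_eq_single (repN H P x0)]
  · -- the surviving term
    have hc := repN_spec H P x0
    have hφ10 : conjAut P x0⁻¹ = conjAut P (repN H P x0)⁻¹ :=
      (conjAut_eq_of_centralizer P hc.1).symm
    have hbar : (((↑(repN H P x0) : G)) : G ⧸ H) = (((↑x0 : G)) : G ⧸ H) := by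
      rw [QuotientGroup.eq_iff_div_mem, div_eq_mul_inv]
      exact hc.2
    have hmem1 : b * ((σG ↑x0 : Aˣ) : A) ∈
        intFixed 𝒪 (σG.comp P.subtype) (conjAut P (repN H P x0)⁻¹) ⊤ := by
      rw [← hφ10]; exact mul_sigma_mem_intFixed P σG x0 ⊤ hb.2
    simp only [LinearMap.comp_apply]
    rw [dsum_component_of_eq H P σG 𝔭 hφ10 _ _ _ hmem1, rhoMapS_mk]
    have hc' : (↑(x0 * (repN H P x0)⁻¹) : G) ∈ Subgroup.centralizer (P : Set G) ⊓ H := by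
      have h2 := inv_mem hc
      simpa [mul_inv_rev] using h2
    have hv : (⟨gradeProj 𝒜 hdec (((↑(repN H P x0) : G)) : G ⧸ H)
          (b * ((σG ↑x0 : Aˣ) : A)) * (((σG ↑(repN H P x0))⁻¹ : Aˣ) : A),
          psi_mem H P σG 𝒜 hmul hσ hdec (repN H P x0) ⊤ hmem1⟩ :
          ↥(𝒜 1 ⊓ intFixed 𝒪 (σG.comp P.subtype) (1 : MulAut ↥P) ⊤)) =
        ⟨b * ((σG ↑(x0 * (repN H P x0)⁻¹) : Aˣ) : A),
          bSigma_mem H P 𝒪 σG 𝒜 hmul hσ hc' hb⟩ := by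
      apply Subtype.ext
      show gradeProj 𝒜 hdec (((↑(repN H P x0) : G)) : G ⧸ H)
          (b * ((σG ↑x0 : Aˣ) : A)) * (((σG ↑(repN H P x0))⁻¹ : Aˣ) : A) =
        b * ((σG ↑(x0 * (repN H P x0)⁻¹) : Aˣ) : A)
      rw [hbar, gradeProj_self 𝒜 hdec hmem0, Subgroup.coe_mul, Subgroup.coe_inv, map_mul,
        map_inv, Units.val_mul, mul_assoc]
    rw [hv, Submodule.mkQ_apply, Submodule.Quotient.eq]
    have hcx : (x0 * (repN H P x0)⁻¹) * repN H P x0 = x0 := by group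
    have hgen : Finsupp.single ((x0 * (repN H P x0)⁻¹) * repN H P x0)
          (Submodule.Quotient.mk ⟨b, hb⟩) -
        Finsupp.single (repN H P x0)
          (Submodule.Quotient.mk ⟨b * ((σG ↑(x0 * (repN H P x0)⁻¹) : Aˣ) : A),
            bSigma_mem H P 𝒪 σG 𝒜 hmul hσ hc' hb⟩) ∈ relSpanS H P σG 𝒜 𝔭 hmul hσ :=
      Submodule.subset_span ⟨x0 * (repN H P x0)⁻¹, repN H P x0, hc', b, hb, rfl⟩
    rw [hcx] at hgen
    have h5 := neg_mem hgen
    rwa [neg_sub] at h5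
  · -- vanishing terms
    intro x hxmem hxne
    simp only [LinearMap.comp_apply]
    by_cases hφ : conjAut P x0⁻¹ = conjAut P x⁻¹
    · have hmemx : b * ((σG ↑x0 : Aˣ) : A) ∈
          intFixed 𝒪 (σG.comp P.subtype) (conjAut P x⁻¹) ⊤ := by
        rw [← hφ]; exact mul_sigma_mem_intFixed P σG x0 ⊤ hb.2
      rw [dsum_component_of_eq H P σG 𝔭 hφ _ _ _ hmemx, rhoMapS_mk]
      have hbarne : (((↑x0 : G)) : G ⧸ H) ≠ (((↑x : G)) : G ⧸ H) := by
        intro hE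
        apply hxne
        have hd : (↑x * (↑x0)⁻¹ : G) ∈ Subgroup.centralizer (P : Set G) ⊓ H :=
          ⟨centralizer_of_conjAut_eq P hφ.symm, by
            have h7 := QuotientGroup.eq_iff_div_mem.mp hE.symm
            rwa [div_eq_mul_inv] at h7⟩
        have h6 := repN_eq_of_rel H P hd
        rw [Finset.mem_filter] at hxmem
        rw [← hxmem.2, h6]
      have hπ0 : gradeProj 𝒜 hdec (((↑x : G)) : G ⧸ H) (b * ((σG ↑x0 : Aˣ) : A)) = 0 :=
        gradeProj_ne 𝒜 hdec hmem0 hbarne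
      have hv0 : (⟨gradeProj 𝒜 hdec (((↑x : G)) : G ⧸ H)
            (b * ((σG ↑x0 : Aˣ) : A)) * (((σG ↑x)⁻¹ : Aˣ) : A),
            psi_mem H P σG 𝒜 hmul hσ hdec x ⊤ hmemx⟩ :
            ↥(𝒜 1 ⊓ intFixed 𝒪 (σG.comp P.subtype) (1 : MulAut ↥P) ⊤)) = 0 := by
        apply Subtype.ext
        simp [hπ0]
      rw [hv0]
      simp
    · rw [dsum_component_of_ne H P σG 𝔭 hφ]
      simp
  · intro hnot
    exfalso
    apply hnot
    rw [Finset.mem_filter]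
    exact ⟨Finset.mem_univ _, repN_idem H P x0⟩

include hmul hσ hdec in
theorem RS_LS_all (m : (↥(Subgroup.normalizer (P : Set G)) →₀ subQuot
      (𝒜 1 ⊓ intFixed 𝒪 (σG.comp P.subtype) (1 : MulAut ↥P) ⊤)
      ((⨆ Q : {Q : Subgroup ↥P // Q < ⊤}, Submodule.span 𝒪
          (relTr (σG.comp P.subtype) (1 : MulAut ↥P) Q ''
            (𝒜 1 ⊓ intFixed 𝒪 (σG.comp P.subtype) (1 : MulAut ↥P) Q))) ⊔
        𝔭 • (𝒜 1 ⊓ intFixed 𝒪 (σG.comp P.subtype) (1 : MulAut ↥P) ⊤))) ⧸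
      relSpanS H P σG 𝒜 𝔭 hmul hσ) :
    RmapS H P σG 𝒜 𝔭 hmul hσ hdec (LmapS H P σG 𝒜 𝔭 hmul hσ m) = m := by
  obtain ⟨f, rfl⟩ := Submodule.Quotient.mk_surjective _ m
  induction f using Finsupp.induction with
  | zero => simp
  | single_add x v f hxs hv ih =>
    obtain ⟨⟨b, hb⟩, rfl⟩ := Submodule.Quotient.mk_surjective _ v
    have hadd : (Submodule.Quotient.mk (Finsupp.single x (Submodule.Quotient.mk ⟨b, hb⟩) + f) :
        _ ⧸ relSpanS H P σG 𝒜 𝔭 hmul hσ) =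
        (Submodule.Quotient.mk (Finsupp.single x (Submodule.Quotient.mk ⟨b, hb⟩)) :
          _ ⧸ relSpanS H P σG 𝒜 𝔭 hmul hσ) +
          Submodule.Quotient.mk f := rfl
    rw [hadd, map_add, map_add, ih, LmapS_apply, RS_LS]

end AuxMain

set_option synthInstance.maxHeartbeats 1000000 in
set_option maxHeartbeats 1000000 in
/-- Let `B` be an `H`-interior `G`-algebra and `A = B ⊗_{𝒪H} 𝒪G` the
induced `G`-interior `Ḡ`-graded algebra (modelled as a `G`-interior algebra with a
`Ḡ`-grading `𝒜`, the image of `g` being homogeneous of degree `ḡ`, and `B = 𝒜 1̄`, the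
conjugation action of `P` on `B` being `b ↦ u⁻¹bu`), and `K = Aut_Ḡ(P)`.  The map
`B(P) ⊗_{kC_H(P)} kN_G(P) → N̄_A^K(P)` sending `Br_P(b) ⊗ x` to the class of `b⊗x = b·x` in
`A(Δ_{φ_x}(P))` (where `φ_x(u) = x⁻¹ux`) is a well-defined injective homomorphism of
`k`-algebras (the source being presented as the quotient of the free module
`N_G(P) →₀ B(P)` by the balancing relations `Br_P(b) ⊗ c·x ∼ Br_P(b·c) ⊗ x`, `c ∈ C_H(P)`,
with multiplication `(Br_P(b) ⊗ x)(Br_P(c) ⊗ y) = Br_P(b·c^{x⁻¹}) ⊗ xy`, which corresponds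
under the stated formula to the multiplication of `N̄_A^K(P)`); its image is a graded
subalgebra of `N̄_A^K(P)`, homogeneous with respect to the pairs `(φ_x, x̄)` (the generator
`Br_P(b) ⊗ x` mapping into the `φ_x`-component, with image class represented by
`b·x ∈ 𝒜 x̄`, last conjunct). -/
theorem stmt17
    (𝒪 : Type*) [CommRing 𝒪] [IsDomain 𝒪] [IsDiscreteValuationRing 𝒪]
    [IsAdicComplete (IsLocalRing.maximalIdeal 𝒪) 𝒪]
    (p : ℕ) [Fact p.Prime] [CharP (IsLocalRing.ResidueField 𝒪) p]
    (G : Type*) [Group G] [Finite G] (H P : Subgroup G) [H.Normal] (hP : IsPGroup p ↥P)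
    (A : Type*) [Ring A] [Algebra 𝒪 A] (σG : G →* Aˣ)
    (𝒜 : G ⧸ H → Submodule 𝒪 A)
    (hmul : ∀ x y : G ⧸ H, 𝒜 x * 𝒜 y ≤ 𝒜 (x * y))
    (hone : (1 : A) ∈ 𝒜 1)
    (hσ : ∀ g : G, ((σG g : Aˣ) : A) ∈ 𝒜 ↑g)
    (hdec : DirectSum.IsInternal 𝒜) :
    ∃ L : ((↥(Subgroup.normalizer (P : Set G)) →₀ subQuot
            (𝒜 1 ⊓ intFixed 𝒪 (σG.comp P.subtype) (1 : MulAut ↥P) ⊤)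
            ((⨆ Q : {Q : Subgroup ↥P // Q < ⊤}, Submodule.span 𝒪
                (relTr (σG.comp P.subtype) (1 : MulAut ↥P) Q ''
                  (𝒜 1 ⊓ intFixed 𝒪 (σG.comp P.subtype) (1 : MulAut ↥P) Q))) ⊔
              IsLocalRing.maximalIdeal 𝒪 •
                (𝒜 1 ⊓ intFixed 𝒪 (σG.comp P.subtype) (1 : MulAut ↥P) ⊤))) ⧸
          Submodule.span 𝒪 {z | ∃ (c x : ↥(Subgroup.normalizer (P : Set G)))
            (hc : (↑c : G) ∈ Subgroup.centralizer (P : Set G) ⊓ H) (b : A)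
            (hb : b ∈ 𝒜 1 ⊓ intFixed 𝒪 (σG.comp P.subtype) (1 : MulAut ↥P) ⊤),
            z = Finsupp.single (c * x) (Submodule.Quotient.mk ⟨b, hb⟩) -
              Finsupp.single x (Submodule.Quotient.mk ⟨b * ((σG ↑c : Aˣ) : A),
                bSigma_mem H P 𝒪 σG 𝒜 hmul hσ hc hb⟩)})
        →ₗ[𝒪]
        (⨁ φ : ↥(AutBar H P), BrQuot 𝒪 (IsLocalRing.maximalIdeal 𝒪)
          (σG.comp P.subtype) (φ : MulAut ↥P)),
      Function.Injective L ∧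
      (∀ (x : ↥(Subgroup.normalizer (P : Set G))) (b : A)
        (hb : b ∈ 𝒜 1 ⊓ intFixed 𝒪 (σG.comp P.subtype) (1 : MulAut ↥P) ⊤),
        L (Submodule.Quotient.mk (Finsupp.single x (Submodule.Quotient.mk ⟨b, hb⟩))) =
          DirectSum.of _ (⟨conjAut P x⁻¹, conjAut_mem_AutBar H P x⟩ : ↥(AutBar H P))
            (Submodule.Quotient.mk ⟨b * ((σG ↑x : Aˣ) : A),
              aSigma_mem_conjFixed P 𝒪 σG x hb.2⟩)) ∧
      -- homogeneity of the image with respect to the pairs `(φ_x, x̄)`: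
      (∀ (x : ↥(Subgroup.normalizer (P : Set G))) (b : A),
        b ∈ 𝒜 1 ⊓ intFixed 𝒪 (σG.comp P.subtype) (1 : MulAut ↥P) ⊤ →
          b * ((σG ↑x : Aˣ) : A) ∈ 𝒜 ↑(↑x : G)) := by
  classical
  refine ⟨LmapS H P σG 𝒜 (IsLocalRing.maximalIdeal 𝒪) hmul hσ, ?_, ?_, ?_⟩
  · exact Function.LeftInverse.injective
      (g := RmapS H P σG 𝒜 (IsLocalRing.maximalIdeal 𝒪) hmul hσ hdec)
      (RS_LS_all H P σG 𝒜 (IsLocalRing.maximalIdeal 𝒪) hmul hσ hdec)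
  · intro x b hb
    exact LmapS_apply H P σG 𝒜 (IsLocalRing.maximalIdeal 𝒪) hmul hσ x b hb
  · intro x b hbmem
    have h := hmul 1 (((↑x : G)) : G ⧸ H) (Submodule.mul_mem_mul hbmem.1 (hσ ↑x))
    rwa [one_mul] at h
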